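/- arXiv:0907.3754 — 5 statements merged into one kernel-verified Lean document; each statement's English description precedes it below -/
import Mathlib

section
/- There is a universal constant c > 0 such that the following holds for every dimension d ≥ 1. Let K ⊆ ℝ^d be a compact set with positive Lebesgue measure and set R = vol(K)^{1/d}. Then K contains a finite set Y with |Y| ≥ e^d such that ‖y − y′‖₂ ≥ c·R·√d for all distinct y, y′ ∈ Y. -/
set_option maxHeartbeats 1000000

open MeasureTheory Set ENNReal Real

lemma gamma_lb {x : ℝ} (hx : 0 < x) :
    x ^ x * Real.exp (-(x + 1)) ≤ Real.Gamma (x + 1) := by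
  have hint : IntegrableOn (fun t : ℝ => Real.exp (-t) * t ^ (x + 1 - 1)) (Ioi 0) :=
    Real.GammaIntegral_convergent (by linarith)
  rw [Real.Gamma_eq_integral (by linarith)]
  have hsub : Ioc x (x + 1) ⊆ Ioi 0 := fun t ht => lt_trans hx ht.1
  have h1 : ∫ t in Ioc x (x + 1), Real.exp (-t) * t ^ (x + 1 - 1) ≤
      ∫ t in Ioi 0, Real.exp (-t) * t ^ (x + 1 - 1) := by
    apply setIntegral_mono_set hint
    · filter_upwards [ae_restrict_mem measurableSet_Ioi] with t ht
      exact mul_nonneg (Real.exp_pos _).le (Real.rpow_nonneg (le_of_lt ht) _)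
    · exact Filter.Eventually.of_forall fun t ht => hsub ht
  refine le_trans ?_ h1
  have hconst : (x ^ x * Real.exp (-(x + 1))) * (volume (Ioc x (x + 1))).toReal ≤
      ∫ t in Ioc x (x + 1), Real.exp (-t) * t ^ (x + 1 - 1) := by
    apply setIntegral_ge_of_const_le_real measurableSet_Ioc (by simp)
    · intro t ht
      have ht1 : x ≤ t := le_of_lt ht.1
      have ht2 : t ≤ x + 1 := ht.2
      have : x ^ x ≤ t ^ (x + 1 - 1) := by
        simp only [add_sub_cancel_right]
        exact Real.rpow_le_rpow hx.le ht1 hx.le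
      calc x ^ x * Real.exp (-(x + 1)) ≤ t ^ (x + 1 - 1) * Real.exp (-t) := by
            apply mul_le_mul this (Real.exp_le_exp.mpr (by linarith)) (Real.exp_pos _).le
            exact Real.rpow_nonneg (by linarith) _
        _ = Real.exp (-t) * t ^ (x + 1 - 1) := mul_comm _ _
    · exact hint.mono_set hsub
  rw [Real.volume_Ioc] at hconst
  simpa using hconst

lemma exists_packing {d : ℕ} (K : Set (EuclideanSpace ℝ (Fin d))) (r : ℝ) (hr : 0 < r) :
    ∀ n : ℕ, (n : ℝ≥0∞) * volume (Metric.ball (0 : EuclideanSpace ℝ (Fin d)) r) < volume K →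
    ∃ Y : Finset (EuclideanSpace ℝ (Fin d)), ↑Y ⊆ K ∧ Y.card = n + 1 ∧
      ∀ y ∈ Y, ∀ y' ∈ Y, y ≠ y' → r ≤ dist y y' := by
  intro n
  induction n with
  | zero =>
    intro hn
    have hK : volume K ≠ 0 := by
      intro h
      rw [h] at hn
      exact (not_lt_of_ge zero_le) hn
    obtain ⟨x, hx⟩ := nonempty_of_measure_ne_zero hK
    refine ⟨{x}, by simpa using hx, by simp, ?_⟩
    intro y hy y' hy' hne
    simp only [Finset.mem_singleton] at hy hy'
    exact absurd (hy.trans hy'.symm) hne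
  | succ n ih =>
    intro hn
    have hle : (n : ℝ≥0∞) * volume (Metric.ball (0 : EuclideanSpace ℝ (Fin d)) r) ≤
        ((n + 1 : ℕ) : ℝ≥0∞) * volume (Metric.ball (0 : EuclideanSpace ℝ (Fin d)) r) :=
      mul_le_mul_left (by exact_mod_cast Nat.cast_le.mpr (Nat.le_succ n)) _
    obtain ⟨Y, hYK, hYcard, hYsep⟩ := ih (lt_of_le_of_lt hle hn)
    by_cases hcov : ∀ x ∈ K, ∃ y ∈ Y, dist x y < r
    · exfalso
      have hKsub : K ⊆ ⋃ y ∈ Y, Metric.ball y r := by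
        intro x hx
        obtain ⟨y, hy, hdxy⟩ := hcov x hx
        exact Set.mem_biUnion hy (by simpa [Metric.mem_ball] using hdxy)
      have hsum : volume K ≤ ∑ y ∈ Y, volume (Metric.ball y r) :=
        le_trans (measure_mono hKsub) (measure_biUnion_finset_le Y _)
      have heq : ∀ y : EuclideanSpace ℝ (Fin d),
          volume (Metric.ball y r) = volume (Metric.ball (0 : EuclideanSpace ℝ (Fin d)) r) :=
        fun y => Measure.addHaar_ball_center volume y r
      rw [Finset.sum_congr rfl (fun y _ => heq y), Finset.sum_const, hYcard,
        nsmul_eq_mul] at hsum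
      exact absurd hsum (not_le_of_gt hn)
    · push_neg at hcov
      obtain ⟨x, hxK, hxsep⟩ := hcov
      classical
      have hxY : x ∉ Y := by
        intro hxY
        have := hxsep x hxY
        rw [dist_self] at this
        linarith
      refine ⟨insert x Y, ?_, ?_, ?_⟩
      · intro z hz
        rcases Finset.mem_insert.mp (by exact_mod_cast hz) with h | h
        · subst h; exact hxK
        · exact hYK h
      · rw [Finset.card_insert_of_notMem hxY, hYcard]
      · intro y hy y' hy' hne
        rcases Finset.mem_insert.mp hy with h1 | h1 <;>
          rcases Finset.mem_insert.mp hy' with h2 | h2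
        · exact absurd (h1.trans h2.symm) hne
        · rw [h1]; exact hxsep y' h2
        · rw [h2, dist_comm]; exact hxsep y h1
        · exact hYsep y h1 y' h2 hne

/-- There is a universal constant `c > 0` such that for every dimension `d ≥ 1` and
every compact set `K ⊆ ℝ^d` of positive Lebesgue measure, setting
`R = vol(K)^{1/d}`, the set `K` contains a finite `c·R·√d`-packing of size at
least `e^d`. -/
theorem packing_in_positive_volume_set :
    ∃ c : ℝ, 0 < c ∧
      ∀ (d : ℕ), 1 ≤ d →
        ∀ K : Set (EuclideanSpace ℝ (Fin d)), IsCompact K → 0 < volume K →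
          ∃ Y : Finset (EuclideanSpace ℝ (Fin d)), ↑Y ⊆ K ∧
            Real.exp d ≤ (Y.card : ℝ) ∧
            ∀ y ∈ Y, ∀ y' ∈ Y, y ≠ y' →
              c * (volume K).toReal ^ (1 / (d : ℝ)) * Real.sqrt d ≤ dist y y' := by
  refine ⟨1/200, by norm_num, ?_⟩
  intro d hd K hK hKvol
  haveI : Nonempty (Fin d) := ⟨⟨0, hd⟩⟩
  have hVfin : volume K ≠ ⊤ := hK.measure_lt_top.ne
  set V : ℝ := (volume K).toReal with hVdef
  have hVpos : 0 < V := ENNReal.toReal_pos hKvol.ne' hVfin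
  set R : ℝ := V ^ (1/(d:ℝ)) with hRdef
  have hdR : (0:ℝ) < d := by exact_mod_cast hd
  have hRpos : 0 < R := Real.rpow_pos_of_pos hVpos _
  set r : ℝ := 1/200 * R * Real.sqrt d with hrdef
  have hsd : 0 < Real.sqrt d := Real.sqrt_pos.mpr hdR
  have hrpos : 0 < r := by positivity
  have hRd : R ^ d = V := by
    rw [hRdef, ← Real.rpow_natCast (V ^ (1/(d:ℝ))) d, ← Real.rpow_mul hVpos.le,
      one_div, inv_mul_cancel₀ (by positivity), Real.rpow_one]
  set G : ℝ := Real.Gamma ((d:ℝ)/2 + 1) with hGdef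
  set D : ℝ := (Real.sqrt 2)^d * (Real.exp (1/2 : ℝ))^d * Real.exp 1 with hDdef
  have hDpos : 0 < D := by positivity
  -- Gamma lower bound in convenient form
  have hG : (Real.sqrt d)^d / D ≤ G := by
    have h0 := gamma_lb (x := (d:ℝ)/2) (by positivity)
    have hexp : Real.exp (-((d:ℝ)/2 + 1)) =
        ((Real.exp (1/2 : ℝ))^d * Real.exp 1)⁻¹ := by
      rw [Real.exp_neg, Real.exp_add, show ((d:ℝ)/2) = (d:ℕ) * (1/2:ℝ) by push_cast; ring,
        Real.exp_nat_mul]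
    have h2 : ((d:ℝ)/2) ^ ((d:ℝ)/2) = (Real.sqrt ((d:ℝ)/2)) ^ d := by
      rw [Real.sqrt_eq_rpow, ← Real.rpow_natCast (((d:ℝ)/2) ^ ((1:ℝ)/2)) d,
        ← Real.rpow_mul (by positivity)]
      congr 1
      push_cast; ring
    have hsqrt2 : Real.sqrt ((d:ℝ)/2) = Real.sqrt d / Real.sqrt 2 := by
      rw [← Real.sqrt_div (by positivity)]
    rw [h2, hexp, hsqrt2, div_pow] at h0
    refine le_trans (le_of_eq ?_) h0
    rw [hDdef]
    field_simp
  have hGpos : 0 < G := lt_of_lt_of_le (by positivity) hG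
  -- the number of points
  set N : ℕ := ⌈Real.exp d⌉₊ with hNdef
  have hNge : Real.exp d ≤ (N:ℝ) := Nat.le_ceil _
  have hNlt : (N:ℝ) < Real.exp d + 1 := Nat.ceil_lt_add_one (Real.exp_pos _).le
  -- numeric bounds
  have hpi : Real.sqrt π ≤ 1.8 := by
    calc Real.sqrt π ≤ Real.sqrt (1.8^2) :=
          Real.sqrt_le_sqrt (by nlinarith [Real.pi_lt_d2])
      _ = 1.8 := Real.sqrt_sq (by norm_num)
  have hs2 : Real.sqrt 2 ≤ 1.5 := by
    calc Real.sqrt 2 ≤ Real.sqrt (1.5^2) := Real.sqrt_le_sqrt (by norm_num)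
      _ = 1.5 := Real.sqrt_sq (by norm_num)
  have he1 : Real.exp 1 ≤ 2.7183 := le_of_lt (by
    have := Real.exp_one_lt_d9; linarith)
  have heh : Real.exp (1/2 : ℝ) ≤ 1.65 := by
    rw [Real.exp_half]
    calc Real.sqrt (Real.exp 1) ≤ Real.sqrt (1.65^2) :=
          Real.sqrt_le_sqrt (by nlinarith [Real.exp_one_lt_d9])
      _ = 1.65 := Real.sqrt_sq (by norm_num)
  have hsp : (0:ℝ) < Real.sqrt π := Real.sqrt_pos.mpr Real.pi_pos
  have hs2p : (0:ℝ) < Real.sqrt 2 := Real.sqrt_pos.mpr (by norm_num)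
  have ha : Real.exp 1 * (1/200) * Real.sqrt π * Real.sqrt 2 * Real.exp (1/2 : ℝ)
      ≤ 1/15 := by
    have c1 : Real.exp 1 * Real.sqrt π ≤ 2.7183 * 1.8 :=
      mul_le_mul he1 hpi hsp.le (by norm_num)
    have c2 : Real.sqrt 2 * Real.exp (1/2 : ℝ) ≤ 1.5 * 1.65 :=
      mul_le_mul hs2 heh (Real.exp_pos _).le (by norm_num)
    calc Real.exp 1 * (1/200) * Real.sqrt π * Real.sqrt 2 * Real.exp (1/2 : ℝ)
        = (Real.exp 1 * Real.sqrt π) * (Real.sqrt 2 * Real.exp (1/2 : ℝ)) * (1/200) := by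
          ring
      _ ≤ (2.7183 * 1.8) * (1.5 * 1.65) * (1/200) := by
          refine mul_le_mul_of_nonneg_right (mul_le_mul c1 c2 ?_ ?_) (by norm_num)
          · exact mul_nonneg hs2p.le (Real.exp_pos _).le
          · norm_num
      _ ≤ 1/15 := by norm_num
  -- the key numeric inequality
  have hC : (N:ℝ) * (1/200:ℝ)^d * (Real.sqrt π)^d * D < 1 := by
    have hed : Real.exp (d:ℝ) = (Real.exp 1)^d := by
      rw [← Real.exp_nat_mul]; norm_num
    have hN2 : (N:ℝ) < 2 * (Real.exp 1)^d := by
      have h1 : (1:ℝ) ≤ Real.exp d := Real.one_le_exp (by positivity)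
      rw [hed] at hNlt h1
      linarith
    have hPpos : (0:ℝ) < (1/200:ℝ)^d * (Real.sqrt π)^d * (Real.sqrt 2)^d *
        (Real.exp (1/2 : ℝ))^d :=
      mul_pos (mul_pos (mul_pos (pow_pos (by norm_num) d) (pow_pos hsp d))
        (pow_pos hs2p d)) (pow_pos (Real.exp_pos _) d)
    have hapow : (Real.exp 1)^d * ((1/200:ℝ)^d * (Real.sqrt π)^d * (Real.sqrt 2)^d *
        (Real.exp (1/2 : ℝ))^d) ≤ (1/15:ℝ)^d := by
      have h := pow_le_pow_left₀ (by positivity :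
        (0:ℝ) ≤ Real.exp 1 * (1/200) * Real.sqrt π * Real.sqrt 2 * Real.exp (1/2 : ℝ)) ha d
      calc (Real.exp 1)^d * ((1/200:ℝ)^d * (Real.sqrt π)^d * (Real.sqrt 2)^d *
          (Real.exp (1/2 : ℝ))^d)
          = (Real.exp 1 * (1/200) * Real.sqrt π * Real.sqrt 2 * Real.exp (1/2 : ℝ))^d := by
            ring
        _ ≤ (1/15:ℝ)^d := h
    have hfrac : ((1:ℝ)/15)^d ≤ 1/15 := by
      calc ((1:ℝ)/15)^d ≤ ((1:ℝ)/15)^1 :=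
            pow_le_pow_of_le_one (by norm_num) (by norm_num) hd
        _ = 1/15 := pow_one _
    calc (N:ℝ) * (1/200:ℝ)^d * (Real.sqrt π)^d * D
        = (N:ℝ) * ((1/200:ℝ)^d * (Real.sqrt π)^d * (Real.sqrt 2)^d *
          (Real.exp (1/2 : ℝ))^d) * Real.exp 1 := by rw [hDdef]; ring
      _ < 2 * (Real.exp 1)^d * ((1/200:ℝ)^d * (Real.sqrt π)^d * (Real.sqrt 2)^d *
          (Real.exp (1/2 : ℝ))^d) * Real.exp 1 := by
          exact mul_lt_mul_of_pos_right
            (mul_lt_mul_of_pos_right hN2 hPpos) (Real.exp_pos 1)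
      _ = 2 * ((Real.exp 1)^d * ((1/200:ℝ)^d * (Real.sqrt π)^d * (Real.sqrt 2)^d *
          (Real.exp (1/2 : ℝ))^d)) * Real.exp 1 := by ring
      _ ≤ 2 * (1/15 : ℝ) * Real.exp 1 := by
          have h := le_trans hapow hfrac
          have := Real.exp_pos 1
          nlinarith
      _ ≤ 2 * (1/15 : ℝ) * 2.7183 := by nlinarith
      _ < 1 := by norm_num
  -- the real-valued volume inequality
  have hreal : (N:ℝ) * (r^d * ((Real.sqrt π)^d / G)) < V := by
    have hrd : r^d = (1/200:ℝ)^d * V * (Real.sqrt d)^d := by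
      rw [hrdef, mul_pow, mul_pow, hRd]
    have hinv : (N:ℝ) * (1/200:ℝ)^d * (Real.sqrt π)^d < 1/D :=
      (lt_div_iff₀ hDpos).mpr hC
    have hLHS : (N:ℝ) * (r^d * ((Real.sqrt π)^d / G)) =
        ((N:ℝ) * (1/200:ℝ)^d * (Real.sqrt π)^d) * (V * (Real.sqrt d)^d) / G := by
      rw [hrd]; field_simp
    rw [hLHS, div_lt_iff₀ hGpos]
    calc ((N:ℝ) * (1/200:ℝ)^d * (Real.sqrt π)^d) * (V * (Real.sqrt d)^d)
        < (1/D) * (V * (Real.sqrt d)^d) := by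
          exact mul_lt_mul_of_pos_right hinv (by positivity)
      _ = V * ((Real.sqrt d)^d / D) := by ring
      _ ≤ V * G := mul_le_mul_of_nonneg_left hG hVpos.le
  -- pass to ENNReal
  have hvb : volume (Metric.ball (0 : EuclideanSpace ℝ (Fin d)) r) =
      ENNReal.ofReal (r^d * ((Real.sqrt π)^d / G)) := by
    rw [EuclideanSpace.volume_ball]
    simp only [Fintype.card_fin]
    rw [← hGdef, ← ENNReal.ofReal_pow hrpos.le, ← ENNReal.ofReal_mul (by positivity)]
  have hnn : ((N - 1 : ℕ) : ℝ≥0∞) * volume (Metric.ball (0 : EuclideanSpace ℝ (Fin d)) r)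
      < volume K := by
    rw [hvb, ← ENNReal.ofReal_natCast, ← ENNReal.ofReal_mul (Nat.cast_nonneg _),
      ← ENNReal.ofReal_toReal hVfin, ← hVdef]
    refine (ENNReal.ofReal_lt_ofReal_iff hVpos).mpr ?_
    refine lt_of_le_of_lt ?_ hreal
    have hXnn : (0:ℝ) ≤ r^d * ((Real.sqrt π)^d / G) := by positivity
    exact mul_le_mul_of_nonneg_right
      (by exact_mod_cast Nat.cast_le.mpr (Nat.sub_le N 1)) hXnn
  obtain ⟨Y, hYK, hYcard, hYsep⟩ := exists_packing K r hrpos (N - 1) hnn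
  have hNpos : 0 < N := Nat.ceil_pos.mpr (Real.exp_pos _)
  refine ⟨Y, hYK, ?_, fun y hy y' hy' hne => hYsep y hy y' hy' hne⟩
  rw [hYcard, Nat.sub_add_cancel hNpos]
  exact hNge
end

section
/- Let ε > 0, let F : ℝ^n → ℝ^d be a surjective linear map, and let K = F(B₁^n), which is a symmetric convex body. For each x ∈ ℝ^n let μ_x be the probability measure on ℝ^d with Lebesgue density a ↦ Z^{−1}·exp(−ε·‖F x − a‖_K), where Z = ∫_{ℝ^d} exp(−ε·‖a‖_K) da. Then the family {μ_x : x ∈ ℝ^n} is ε-differentially private: for all x, y ∈ ℝ^n with ‖x − y‖₁ ≤ 1 and every measurable S ⊆ ℝ^d, μ_x(S) ≤ exp(ε)·μ_y(S). -/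
open MeasureTheory

/-- The K-norm mechanism is ε-differentially private: with `K = F(B₁^n)` for a
surjective linear map `F : ℝ^n → ℝ^d`, and `μ_x` having Lebesgue density
`a ↦ Z⁻¹ exp(−ε‖Fx − a‖_K)` where `Z = ∫ exp(−ε‖a‖_K) da`, we have
`μ_x(S) ≤ exp(ε) μ_y(S)` whenever `‖x − y‖₁ ≤ 1`. -/
theorem knorm_mechanism_private (n d : ℕ) (ε : ℝ) (hε : 0 < ε)
    (F : EuclideanSpace ℝ (Fin n) →ₗ[ℝ] EuclideanSpace ℝ (Fin d))
    (hF : Function.Surjective F)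
    (K : Set (EuclideanSpace ℝ (Fin d)))
    (hK : K = F '' {x : EuclideanSpace ℝ (Fin n) | ∑ i, |x i| ≤ 1})
    (Z : ℝ) (hZ : Z = ∫ a : EuclideanSpace ℝ (Fin d), Real.exp (-ε * gauge K a))
    (μ : EuclideanSpace ℝ (Fin n) → Measure (EuclideanSpace ℝ (Fin d)))
    (hμ : ∀ x, μ x = volume.withDensity
      (fun a => ENNReal.ofReal (Z⁻¹ * Real.exp (-ε * gauge K (F x - a)))))
    (x y : EuclideanSpace ℝ (Fin n)) (hxy : (∑ i, |x i - y i|) ≤ 1)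
    (S : Set (EuclideanSpace ℝ (Fin d))) (hS : MeasurableSet S) :
    μ x S ≤ ENNReal.ofReal (Real.exp ε) * μ y S := by
  set B : Set (EuclideanSpace ℝ (Fin n)) := {x : EuclideanSpace ℝ (Fin n) | ∑ i, |x i| ≤ 1}
  -- B is convex
  have hBconv : Convex ℝ B := by
    intro a ha b hb s t hs ht hst
    simp only [B, Set.mem_setOf_eq] at ha hb ⊢
    calc ∑ i, |(s • a + t • b) i| ≤ ∑ i, (s * |a i| + t * |b i|) := by
          apply Finset.sum_le_sum
          intro i _
          have : (s • a + t • b) i = s * a i + t * b i := rfl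
          rw [this]
          calc |s * a i + t * b i| ≤ |s * a i| + |t * b i| := abs_add_le _ _
            _ = s * |a i| + t * |b i| := by
                rw [abs_mul, abs_mul, abs_of_nonneg hs, abs_of_nonneg ht]
      _ = s * ∑ i, |a i| + t * ∑ i, |b i| := by
          rw [Finset.sum_add_distrib, Finset.mul_sum, Finset.mul_sum]
      _ ≤ s * 1 + t * 1 := by
          gcongr
      _ = 1 := by linarith
  have hKconv : Convex ℝ K := hK ▸ hBconv.linear_image F
  -- K is a neighborhood of 0
  have hKnhds : K ∈ nhds (0 : EuclideanSpace ℝ (Fin d)) := by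
    have hBopen : {x : EuclideanSpace ℝ (Fin n) | ∑ i, |x i| < 1} ∈
        nhds (0 : EuclideanSpace ℝ (Fin n)) := by
      have hcont : Continuous fun x : EuclideanSpace ℝ (Fin n) => ∑ i, |x i| :=
        continuous_finset_sum _ fun i _ => ((EuclideanSpace.proj i :
          EuclideanSpace ℝ (Fin n) →L[ℝ] ℝ).continuous).abs
      have : IsOpen {x : EuclideanSpace ℝ (Fin n) | ∑ i, |x i| < 1} :=
        isOpen_lt hcont continuous_const
      refine this.mem_nhds ?_
      simp
    let Fc : EuclideanSpace ℝ (Fin n) →L[ℝ] EuclideanSpace ℝ (Fin d) :=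
      LinearMap.toContinuousLinearMap F
    have hopen : IsOpenMap Fc := ContinuousLinearMap.isOpenMap Fc hF
    have h0 : (0 : EuclideanSpace ℝ (Fin d)) = Fc 0 := by simp
    have := hopen.image_mem_nhds hBopen
    simp only [map_zero] at this
    refine Filter.mem_of_superset this ?_
    rw [hK]
    refine Set.image_mono ?_
    intro z hz
    simp only [Set.mem_setOf_eq] at hz ⊢
    exact le_of_lt hz
  have hKabs : Absorbent ℝ K := absorbent_nhds_zero hKnhds
  -- gauge of F(y - x)
  have hmem : F (y - x) ∈ K := by
    rw [hK]
    refine ⟨y - x, ?_, rfl⟩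
    show ∑ i, |(y - x) i| ≤ 1
    calc ∑ i, |(y - x) i| = ∑ i, |x i - y i| := by
          refine Finset.sum_congr rfl fun i _ => ?_
          have : (y - x) i = y i - x i := rfl
          rw [this, abs_sub_comm]
      _ ≤ 1 := hxy
  have hg1 : gauge K (F y - F x) ≤ 1 := by
    rw [← map_sub]; exact gauge_le_one_of_mem hmem
  -- pointwise density bound
  have hZinv : (0 : ℝ) ≤ Z⁻¹ := by
    refine inv_nonneg.2 ?_
    rw [hZ]
    exact integral_nonneg fun a => (Real.exp_pos _).le
  have hpt : ∀ a : EuclideanSpace ℝ (Fin d),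
      ENNReal.ofReal (Z⁻¹ * Real.exp (-ε * gauge K (F x - a))) ≤
      ENNReal.ofReal (Real.exp ε) *
        ENNReal.ofReal (Z⁻¹ * Real.exp (-ε * gauge K (F y - a))) := by
    intro a
    rw [← ENNReal.ofReal_mul (Real.exp_pos _).le]
    apply ENNReal.ofReal_le_ofReal
    have hsub : gauge K (F y - a) ≤ gauge K (F y - F x) + gauge K (F x - a) := by
      have : F y - a = (F y - F x) + (F x - a) := by abel
      rw [this]
      exact gauge_add_le hKconv hKabs _ _
    have hgy : gauge K (F y - a) ≤ 1 + gauge K (F x - a) := by linarith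
    have hexp : Real.exp (-ε * gauge K (F x - a)) ≤
        Real.exp ε * Real.exp (-ε * gauge K (F y - a)) := by
      rw [← Real.exp_add]
      apply Real.exp_le_exp.2
      nlinarith
    calc Z⁻¹ * Real.exp (-ε * gauge K (F x - a))
        ≤ Z⁻¹ * (Real.exp ε * Real.exp (-ε * gauge K (F y - a))) := by
          exact mul_le_mul_of_nonneg_left hexp hZinv
      _ = Real.exp ε * (Z⁻¹ * Real.exp (-ε * gauge K (F y - a))) := by ring
  -- conclude
  rw [hμ x, hμ y, withDensity_apply _ hS, withDensity_apply _ hS]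
  calc ∫⁻ a in S, ENNReal.ofReal (Z⁻¹ * Real.exp (-ε * gauge K (F x - a))) ∂volume
      ≤ ∫⁻ a in S, ENNReal.ofReal (Real.exp ε) *
          ENNReal.ofReal (Z⁻¹ * Real.exp (-ε * gauge K (F y - a))) ∂volume :=
        lintegral_mono fun a => hpt a
    _ = ENNReal.ofReal (Real.exp ε) *
        ∫⁻ a in S, ENNReal.ofReal (Z⁻¹ * Real.exp (-ε * gauge K (F y - a))) ∂volume :=
        lintegral_const_mul' _ _ ENNReal.ofReal_ne_top
end

section
/- Let ε > 0 and let K ⊆ ℝ^d be a symmetric convex body. Let r be a random variable with the Gamma(d+1, ε^{−1}) distribution (density t ↦ ε^{d+1}·t^d·e^{−εt}/Γ(d+1) on (0, ∞)) and, independently, let z be uniformly distributed on K. Then the distribution of r·z equals the probability measure on ℝ^d with Lebesgue density a ↦ exp(−ε·‖a‖_K)/(Γ(d+1)·ε^{−d}·vol(K)). -/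
open MeasureTheory Pointwise
open scoped ENNReal

section aux
open Set Real ENNReal

variable {d : ℕ}



lemma exp_tail {ε : ℝ} (hε : 0 < ε) (t : ℝ) :
    ∫⁻ r in Set.Ioi t, ENNReal.ofReal (ε * Real.exp (-(ε * r))) =
      ENNReal.ofReal (Real.exp (-(ε * t))) := by
  have hint : IntegrableOn (fun r : ℝ => ε * Real.exp (-(ε * r))) (Set.Ioi t) := by
    simpa [neg_mul, IntegrableOn] using (exp_neg_integrableOn_Ioi t hε).const_mul ε
  rw [← ofReal_integral_eq_lintegral_ofReal hint (by filter_upwards with r using by positivity)]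
  congr 1
  rw [MeasureTheory.integral_const_mul]
  have h2 : (∫ r in Set.Ioi t, Real.exp (-(ε * r))) = ε⁻¹ * Real.exp (-(ε * t)) := by
    have := integral_comp_mul_left_Ioi (fun x => Real.exp (-x)) t hε
    simp only [smul_eq_mul] at this
    rw [this, integral_exp_neg_Ioi]
  rw [h2]; field_simp

lemma rhs_layer {K : Set (EuclideanSpace ℝ (Fin d))}
    (hKconv : Convex ℝ K) (h0 : (0 : EuclideanSpace ℝ (Fin d)) ∈ interior K)
    {ε : ℝ} (hε : 0 < ε) (A : Set (EuclideanSpace ℝ (Fin d))) :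
    ∫⁻ a in A, ENNReal.ofReal (Real.exp (-(ε * gauge K a))) =
      ∫⁻ r in Set.Ioi (0:ℝ), ENNReal.ofReal (ε * Real.exp (-(ε * r))) *
        volume (A ∩ {a : EuclideanSpace ℝ (Fin d) | gauge K a < r}) := by
  have hgc : Continuous (gauge K) :=
    continuous_gauge hKconv (mem_interior_iff_mem_nhds.mp h0)
  set h : ℝ → ℝ≥0∞ := fun r => ENNReal.ofReal (ε * Real.exp (-(ε * r))) with hh
  have hmeas_h : Measurable h :=
    (measurable_const.mul ((measurable_const.mul measurable_id).neg.exp)).ennreal_ofReal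
  -- step 1: pointwise layer
  have step1 : ∀ a : EuclideanSpace ℝ (Fin d),
      ENNReal.ofReal (Real.exp (-(ε * gauge K a))) =
      ∫⁻ r, Set.indicator {p : ℝ | gauge K a < p} h r := by
    intro a
    rw [show {p : ℝ | gauge K a < p} = Set.Ioi (gauge K a) from rfl,
      lintegral_indicator measurableSet_Ioi _, exp_tail hε]
  simp_rw [step1]
  -- step 2: swap
  have hF : Measurable fun q : EuclideanSpace ℝ (Fin d) × ℝ =>
      Set.indicator {p : EuclideanSpace ℝ (Fin d) × ℝ | gauge K p.1 < p.2}
        (fun p => h p.2) q := by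
    apply Measurable.indicator (hmeas_h.comp measurable_snd)
    exact measurableSet_lt (hgc.comp continuous_fst).measurable measurable_snd
  have hswap := lintegral_lintegral_swap (μ := volume.restrict A) (ν := volume)
    (f := fun a r => Set.indicator {p : EuclideanSpace ℝ (Fin d) × ℝ | gauge K p.1 < p.2}
        (fun p => h p.2) (a, r)) hF.aemeasurable
  have heq1 : ∀ a : EuclideanSpace ℝ (Fin d), ∀ r : ℝ,
      Set.indicator {p : ℝ | gauge K a < p} h r =
      Set.indicator {p : EuclideanSpace ℝ (Fin d) × ℝ | gauge K p.1 < p.2}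
        (fun p => h p.2) (a, r) := by
    intro a r
    simp [Set.indicator_apply]
  calc ∫⁻ a in A, ∫⁻ r, Set.indicator {p : ℝ | gauge K a < p} h r
      = ∫⁻ r, ∫⁻ a in A, Set.indicator {p : EuclideanSpace ℝ (Fin d) × ℝ | gauge K p.1 < p.2}
          (fun p => h p.2) (a, r) := by
        rw [← hswap]
        exact lintegral_congr fun a => lintegral_congr fun r => heq1 a r
    _ = ∫⁻ r, h r * volume (A ∩ {a : EuclideanSpace ℝ (Fin d) | gauge K a < r}) := by
        refine lintegral_congr fun r => ?_
        have : ∀ a : EuclideanSpace ℝ (Fin d),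
            Set.indicator {p : EuclideanSpace ℝ (Fin d) × ℝ | gauge K p.1 < p.2}
              (fun p => h p.2) (a, r) =
            Set.indicator {a : EuclideanSpace ℝ (Fin d) | gauge K a < r} (fun _ => h r) a := by
          intro a; simp [Set.indicator_apply]
        simp_rw [this]
        have hS : MeasurableSet {a : EuclideanSpace ℝ (Fin d) | gauge K a < r} :=
          measurableSet_lt hgc.measurable measurable_const
        rw [lintegral_indicator hS _, Measure.restrict_restrict hS, setLIntegral_const,
          Set.inter_comm]
    _ = ∫⁻ r in Set.Ioi (0:ℝ), h r * volume (A ∩ {a : EuclideanSpace ℝ (Fin d) | gauge K a < r}) := by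
        rw [← lintegral_indicator measurableSet_Ioi _]
        refine lintegral_congr fun r => ?_
        by_cases hr : r ∈ Set.Ioi (0:ℝ)
        · rw [Set.indicator_of_mem hr]
        · rw [Set.indicator_of_notMem hr]
          have : {a : EuclideanSpace ℝ (Fin d) | gauge K a < r} = ∅ := by
            ext a
            simp only [Set.mem_setOf_eq, Set.mem_empty_iff_false, iff_false, not_lt]
            exact le_trans (by simpa using hr) (gauge_nonneg a)
          rw [this]
          simp


lemma neg_one_smul_set' (S : Set (EuclideanSpace ℝ (Fin d))) : (-1 : ℝ) • S = -S := by
  ext y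
  simp only [Set.mem_smul_set, Set.mem_neg]
  constructor
  · rintro ⟨z, hz, rfl⟩; simpa using hz
  · intro hy; exact ⟨-y, hy, by simp⟩

lemma zero_mem_int {K : Set (EuclideanSpace ℝ (Fin d))} (hKconv : Convex ℝ K)
    (hKsymm : K = -K) (hKint : (interior K).Nonempty) : (0 : EuclideanSpace ℝ (Fin d)) ∈ interior K := by
  obtain ⟨x, hx⟩ := hKint
  have hneg : interior (-K) = -interior K := by
    rw [← neg_one_smul_set' K, interior_smul₀ (by norm_num : (-1:ℝ) ≠ 0), neg_one_smul_set']
  have hx' : -x ∈ interior K := by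
    rw [hKsymm, hneg]
    exact Set.neg_mem_neg.mpr hx
  have := hKconv.interior hx hx' (by norm_num : (0:ℝ) ≤ 1/2) (by norm_num : (0:ℝ) ≤ 1/2) (by norm_num)
  simpa [smul_neg] using this

lemma gauge_le_set {K : Set (EuclideanSpace ℝ (Fin d))} (hKcomp : IsCompact K)
    (hKconv : Convex ℝ K) (h0 : (0 : EuclideanSpace ℝ (Fin d)) ∈ interior K)
    {r : ℝ} (hr : 0 < r) :
    {a : EuclideanSpace ℝ (Fin d) | gauge K a ≤ r} = r • K := by
  have hnhds : K ∈ nhds (0 : EuclideanSpace ℝ (Fin d)) := mem_interior_iff_mem_nhds.mp h0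
  ext a
  rw [Set.mem_setOf_eq, Set.mem_smul_set_iff_inv_smul_mem₀ hr.ne']
  have key : gauge K a ≤ r ↔ gauge K (r⁻¹ • a) ≤ 1 := by
    rw [gauge_smul_of_nonneg (inv_nonneg.mpr hr.le), smul_eq_mul]
    constructor
    · intro h
      calc r⁻¹ * gauge K a ≤ r⁻¹ * r := by gcongr
        _ = 1 := inv_mul_cancel₀ hr.ne'
    · intro h
      have h2 := mul_le_mul_of_nonneg_left h hr.le
      rwa [← mul_assoc, mul_inv_cancel₀ hr.ne', one_mul, mul_one] at h2
  rw [key, gauge_le_one_iff_mem_closure hKconv hnhds, hKcomp.isClosed.closure_eq]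

lemma gauge_lt_set {K : Set (EuclideanSpace ℝ (Fin d))}
    (hKconv : Convex ℝ K) (h0 : (0 : EuclideanSpace ℝ (Fin d)) ∈ interior K)
    {r : ℝ} (hr : 0 < r) :
    {a : EuclideanSpace ℝ (Fin d) | gauge K a < r} = r • interior K := by
  have hnhds : K ∈ nhds (0 : EuclideanSpace ℝ (Fin d)) := mem_interior_iff_mem_nhds.mp h0
  ext a
  rw [Set.mem_setOf_eq, Set.mem_smul_set_iff_inv_smul_mem₀ hr.ne']
  have key : gauge K a < r ↔ gauge K (r⁻¹ • a) < 1 := by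
    rw [gauge_smul_of_nonneg (inv_nonneg.mpr hr.le), smul_eq_mul]
    constructor
    · intro h
      calc r⁻¹ * gauge K a < r⁻¹ * r := by gcongr
        _ = 1 := inv_mul_cancel₀ hr.ne'
    · intro h
      have h2 := mul_lt_mul_of_pos_left h hr
      rwa [← mul_assoc, mul_inv_cancel₀ hr.ne', one_mul, mul_one] at h2
  rw [key, gauge_lt_one_iff_mem_interior hKconv hnhds]


lemma meas_inter_smul {K : Set (EuclideanSpace ℝ (Fin d))}
    (hKconv : Convex ℝ K)
    (A : Set (EuclideanSpace ℝ (Fin d))) (r : ℝ) :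
    volume (A ∩ r • interior K) = volume (A ∩ r • K) := by
  apply le_antisymm (measure_mono (Set.inter_subset_inter_right _ (Set.smul_set_mono interior_subset)))
  have hnull : volume (r • frontier K) = 0 := by
    rw [Measure.addHaar_smul volume, hKconv.addHaar_frontier volume, mul_zero]
  have hsub : A ∩ r • K ⊆ (A ∩ r • interior K) ∪ r • frontier K := by
    rintro x ⟨hxA, hxK⟩
    obtain ⟨y, hy, rfl⟩ := hxK
    by_cases hyi : y ∈ interior K
    · exact Or.inl ⟨hxA, Set.smul_mem_smul_set hyi⟩
    · exact Or.inr (Set.smul_mem_smul_set ⟨subset_closure hy, hyi⟩)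
  calc volume (A ∩ r • K) ≤ volume ((A ∩ r • interior K) ∪ r • frontier K) := measure_mono hsub
    _ ≤ volume (A ∩ r • interior K) + volume (r • frontier K) := measure_union_le _ _
    _ = volume (A ∩ r • interior K) := by rw [hnull, add_zero]

lemma smul_set_finrank (r : ℝ) (S : Set (EuclideanSpace ℝ (Fin d))) :
    volume (r • S) = ENNReal.ofReal (|r| ^ d) * volume S := by
  rw [Measure.addHaar_smul volume]
  congr
  rw [finrank_euclideanSpace_fin, abs_pow]

end aux

/-- Sampling representation of the K-norm density: if `r ∼ Gamma(d+1, ε⁻¹)`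
(rate `ε`) and independently `z` is uniform on the symmetric convex body `K`,
then `r · z` has Lebesgue density `a ↦ exp(−ε‖a‖_K)/(Γ(d+1) ε^{−d} vol(K))`. -/
theorem gamma_times_uniform_is_knorm (d : ℕ) (hd : 1 ≤ d)
    (K : Set (EuclideanSpace ℝ (Fin d)))
    (hKcomp : IsCompact K) (hKconv : Convex ℝ K) (hKsymm : K = -K)
    (hKint : (interior K).Nonempty) (ε : ℝ) (hε : 0 < ε) :
    Measure.map (fun q : ℝ × EuclideanSpace ℝ (Fin d) => q.1 • q.2)
        ((ProbabilityTheory.gammaMeasure ((d : ℝ) + 1) ε).prod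
          ((volume K)⁻¹ • volume.restrict K)) =
      volume.withDensity (fun a => ENNReal.ofReal
        (Real.exp (-ε * gauge K a) /
          (Real.Gamma ((d : ℝ) + 1) * ε⁻¹ ^ d * (volume K).toReal))) := by
  classical
  have h0 : (0 : EuclideanSpace ℝ (Fin d)) ∈ interior K := zero_mem_int hKconv hKsymm hKint
  have hKmeas : MeasurableSet K := hKcomp.isClosed.measurableSet
  have hvolK_ne : volume K ≠ 0 := (Measure.measure_pos_of_nonempty_interior volume hKint).ne'
  have hvolK_fin : volume K ≠ ⊤ := hKcomp.measure_lt_top.ne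
  have hΓ : 0 < Real.Gamma ((d:ℝ)+1) := Real.Gamma_pos_of_pos (by positivity)
  have htR : 0 < (volume K).toReal := ENNReal.toReal_pos hvolK_ne hvolK_fin
  set ν : Measure (EuclideanSpace ℝ (Fin d)) := (volume K)⁻¹ • volume.restrict K with hν
  haveI : IsFiniteMeasure ν := by
    constructor
    rw [hν, Measure.smul_apply, smul_eq_mul, Measure.restrict_apply_univ,
      ENNReal.inv_mul_cancel hvolK_ne hvolK_fin]
    exact ENNReal.one_lt_top
  have hf : Measurable fun q : ℝ × EuclideanSpace ℝ (Fin d) => q.1 • q.2 :=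
    continuous_smul.measurable
  have hpdfm : Measurable (ProbabilityTheory.gammaPDF ((d:ℝ)+1) ε) :=
    (ProbabilityTheory.measurable_gammaPDFReal _ _).ennreal_ofReal
  ext A hA
  set V : ℝ → ℝ≥0∞ := fun r => volume (A ∩ r • K) with hV
  set c : ℝ := Real.Gamma ((d:ℝ)+1) * ε⁻¹ ^ d * (volume K).toReal with hc
  have hcpos : 0 < c := mul_pos (mul_pos hΓ (pow_pos (inv_pos.mpr hε) d)) htR
  have h_ne : ∀ᵐ r : ℝ, r ≠ 0 := by
    have h1 : volume ({0} : Set ℝ) = 0 := measure_singleton 0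
    exact Filter.eventually_of_mem (compl_mem_ae_iff.mpr h1) (fun x hx => by simpa using hx)
  -- LHS
  have hLHS : (Measure.map (fun q : ℝ × EuclideanSpace ℝ (Fin d) => q.1 • q.2)
        ((ProbabilityTheory.gammaMeasure ((d : ℝ) + 1) ε).prod ν)) A =
      ∫⁻ r in Set.Ioi (0:ℝ),
        ENNReal.ofReal (ε ^ (d+1) / Real.Gamma ((d:ℝ)+1) * Real.exp (-(ε * r))) *
          ((volume K)⁻¹ * V r) := by
    rw [Measure.map_apply hf hA, ProbabilityTheory.gammaMeasure,
      Measure.prod_apply (hf hA),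
      lintegral_withDensity_eq_lintegral_mul _ hpdfm
        (measurable_measure_prodMk_left (hf hA))]
    rw [← lintegral_indicator measurableSet_Ioi]
    refine lintegral_congr_ae ?_
    filter_upwards [h_ne] with r hr0
    rcases lt_or_gt_of_ne hr0 with hneg | hpos
    · rw [Set.indicator_of_notMem (by simpa using hneg.le.not_gt : r ∉ Set.Ioi (0:ℝ))]
      simp [ProbabilityTheory.gammaPDF_of_neg hneg]
    · rw [Set.indicator_of_mem (Set.mem_Ioi.mpr hpos)]
      have hpre : Prod.mk r ⁻¹' ((fun q : ℝ × EuclideanSpace ℝ (Fin d) => q.1 • q.2) ⁻¹' A) =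
          (fun z : EuclideanSpace ℝ (Fin d) => r • z) ⁻¹' A := rfl
      have hsetm : MeasurableSet ((fun z : EuclideanSpace ℝ (Fin d) => r • z) ⁻¹' A) :=
        (measurable_const_smul r) hA
      have hset : (fun z : EuclideanSpace ℝ (Fin d) => r • z) ⁻¹' A ∩ K =
          r⁻¹ • (A ∩ r • K) := by
        rw [Set.preimage_smul₀ hpos.ne', Set.smul_set_inter₀ (inv_ne_zero hpos.ne'),
          inv_smul_smul₀ hpos.ne']
      have hν_apply : ν (Prod.mk r ⁻¹' ((fun q : ℝ × EuclideanSpace ℝ (Fin d) => q.1 • q.2) ⁻¹' A)) =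
          (volume K)⁻¹ * (ENNReal.ofReal (r⁻¹ ^ d) * V r) := by
        rw [hpre, hν, Measure.smul_apply, smul_eq_mul, Measure.restrict_apply hsetm, hset,
          smul_set_finrank, abs_of_pos (inv_pos.mpr hpos), hV]
      rw [Pi.mul_apply, hν_apply,
        ProbabilityTheory.gammaPDF_of_nonneg hpos.le]
      have hexp : ε ^ ((d:ℝ)+1) / Real.Gamma ((d:ℝ)+1) * r ^ (((d:ℝ)+1)-1) *
          Real.exp (-(ε * r)) = ε ^ (d+1) / Real.Gamma ((d:ℝ)+1) * r ^ d * Real.exp (-(ε*r)) := by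
        rw [add_sub_cancel_right, Real.rpow_natCast,
          show ((d:ℝ)+1) = ((d+1 : ℕ):ℝ) by push_cast; ring, Real.rpow_natCast]
      rw [hexp]
      have hcoeff : ENNReal.ofReal (ε ^ (d+1) / Real.Gamma ((d:ℝ)+1) * r ^ d * Real.exp (-(ε*r))) *
          ENNReal.ofReal (r⁻¹ ^ d) =
          ENNReal.ofReal (ε ^ (d+1) / Real.Gamma ((d:ℝ)+1) * Real.exp (-(ε * r))) := by
        rw [← ENNReal.ofReal_mul (by positivity)]
        congr 1
        field_simp
        ring_nf
        rw [← mul_pow, mul_inv_cancel₀ hpos.ne', one_pow]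
      calc ENNReal.ofReal (ε ^ (d+1) / Real.Gamma ((d:ℝ)+1) * r ^ d * Real.exp (-(ε*r))) *
            ((volume K)⁻¹ * (ENNReal.ofReal (r⁻¹ ^ d) * V r))
          = (ENNReal.ofReal (ε ^ (d+1) / Real.Gamma ((d:ℝ)+1) * r ^ d * Real.exp (-(ε*r))) *
            ENNReal.ofReal (r⁻¹ ^ d)) * ((volume K)⁻¹ * V r) := by ring
        _ = ENNReal.ofReal (ε ^ (d+1) / Real.Gamma ((d:ℝ)+1) * Real.exp (-(ε * r))) *
            ((volume K)⁻¹ * V r) := by rw [hcoeff]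
  -- RHS
  have hcinv : (ENNReal.ofReal c)⁻¹ ≠ ⊤ := by
    simp [ENNReal.inv_ne_top, ENNReal.ofReal_pos.mpr hcpos, (ENNReal.ofReal_pos.mpr hcpos).ne']
  have hRHS : (volume.withDensity (fun a => ENNReal.ofReal
        (Real.exp (-ε * gauge K a) / c))) A =
      ∫⁻ r in Set.Ioi (0:ℝ),
        ENNReal.ofReal (ε * Real.exp (-(ε * r))) * V r * (ENNReal.ofReal c)⁻¹ := by
    rw [withDensity_apply _ hA]
    have h1 : ∀ a : EuclideanSpace ℝ (Fin d),
        ENNReal.ofReal (Real.exp (-ε * gauge K a) / c) =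
        ENNReal.ofReal (Real.exp (-(ε * gauge K a))) * (ENNReal.ofReal c)⁻¹ := by
      intro a
      rw [ENNReal.ofReal_div_of_pos hcpos, div_eq_mul_inv, neg_mul]
    simp_rw [h1]
    rw [lintegral_mul_const' _ _ hcinv, rhs_layer hKconv h0 hε]
    rw [← lintegral_mul_const' _ _ hcinv]
    refine setLIntegral_congr_fun measurableSet_Ioi (fun r hr => ?_)
    rw [gauge_lt_set hKconv h0 hr, meas_inter_smul hKconv A r]
  rw [hLHS, hRHS]
  -- match integrands
  refine setLIntegral_congr_fun measurableSet_Ioi (fun r hr => ?_)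
  have hpos1 : 0 < Real.Gamma ((d:ℝ)+1) * ε⁻¹ ^ d := mul_pos hΓ (pow_pos (inv_pos.mpr hε) d)
  have hofc : ENNReal.ofReal c = ENNReal.ofReal (Real.Gamma ((d:ℝ)+1) * ε⁻¹ ^ d) * volume K := by
    rw [hc, ENNReal.ofReal_mul hpos1.le, ENNReal.ofReal_toReal hvolK_fin]
  have hinv : (ENNReal.ofReal c)⁻¹ =
      ENNReal.ofReal ((Real.Gamma ((d:ℝ)+1) * ε⁻¹ ^ d)⁻¹) * (volume K)⁻¹ := by
    rw [hofc, ENNReal.mul_inv (Or.inl (ENNReal.ofReal_pos.mpr hpos1).ne') (Or.inl ENNReal.ofReal_ne_top),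
      ENNReal.ofReal_inv_of_pos hpos1]
  rw [hinv]
  have hcoeff2 : ENNReal.ofReal (ε ^ (d+1) / Real.Gamma ((d:ℝ)+1) * Real.exp (-(ε * r))) =
      ENNReal.ofReal (ε * Real.exp (-(ε * r))) *
        ENNReal.ofReal ((Real.Gamma ((d:ℝ)+1) * ε⁻¹ ^ d)⁻¹) := by
    rw [← ENNReal.ofReal_mul (by positivity)]
    congr 1
    rw [inv_pow]
    field_simp
    ring
  rw [hcoeff2]
  ring
end

section
/- Let ε > 0, let F : ℝ^n → ℝ^d be a surjective linear map, and let K = F(B₁^n). Suppose there are constants c, L > 0 such that K is in c-approximately isotropic position with constant L, i.e., for every unit vector v ∈ ℝ^d, (1/vol(K))·∫_K ⟨z, v⟩² dz ≤ c²·L²·vol(K)^{2/d}. Then the K-norm mechanism {μ_x} (with μ_x having Lebesgue density a ↦ Z^{−1}·exp(−ε·‖F x − a‖_K)) satisfies, for every x ∈ ℝ^n, E_{a∼μ_x} ‖F x − a‖₂ ≤ ((d+1)/ε)·√d·c·L·vol(K)^{1/d}. -/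
open MeasureTheory

open Set Pointwise
open scoped ENNReal NNReal

section AuxKnorm

-- tail of the exponential distribution
lemma aux_exp_tail {ε : ℝ} (hε : 0 < ε) (s : ℝ) :
    ∫⁻ t in Ioi s, ENNReal.ofReal (ε * Real.exp (-ε * t)) = ENNReal.ofReal (Real.exp (-ε * s)) := by
  rw [← ofReal_integral_eq_lintegral_ofReal ((exp_neg_integrableOn_Ioi s hε).const_mul ε)
    (Filter.Eventually.of_forall fun t => by positivity)]
  congr 1
  have h1 : ∫ t in Ioi s, ε * Real.exp (-ε * t) = ε * ∫ t in Ioi s, Real.exp (-(ε * t)) := by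
    simp_rw [MeasureTheory.integral_const_mul, neg_mul]
  rw [h1]
  have h2 := integral_comp_mul_left_Ioi (fun u => Real.exp (-u)) s hε
  rw [h2, integral_exp_neg_Ioi, smul_eq_mul, ← mul_assoc, mul_inv_cancel₀ hε.ne', one_mul, neg_mul]

-- integrability of t^m e^{-εt}
lemma aux_int_pow_exp {ε : ℝ} (hε : 0 < ε) (m : ℕ) :
    IntegrableOn (fun t : ℝ => t ^ m * Real.exp (-ε * t)) (Ioi 0) := by
  have := integrableOn_rpow_mul_exp_neg_mul_rpow (p := 1) (s := m) (b := ε)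
    (lt_of_lt_of_le neg_one_lt_zero (Nat.cast_nonneg m)) one_pos hε
  simpa only [Real.rpow_one, Real.rpow_natCast] using this

-- value of the Gamma-type integral
lemma aux_gamma_val {ε : ℝ} (hε : 0 < ε) (m : ℕ) :
    ∫ t in Ioi (0:ℝ), t ^ m * Real.exp (-ε * t) = (1 / ε) ^ (m + 1) * m.factorial := by
  have h := Real.integral_rpow_mul_exp_neg_mul_Ioi (a := (m : ℝ) + 1) (r := ε)
    (by positivity) hε
  have h2 : ∫ t in Ioi (0:ℝ), t ^ ((m : ℝ) + 1 - 1) * Real.exp (-(ε * t))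
      = ∫ t in Ioi (0:ℝ), t ^ m * Real.exp (-ε * t) := by
    congr 1 with t
    rw [add_sub_cancel_right, Real.rpow_natCast, neg_mul]
  rw [h2] at h
  rw [h, Real.Gamma_nat_eq_factorial]
  congr 1
  rw [← Real.rpow_natCast (1/ε) (m+1)]
  push_cast
  ring_nf

lemma aux_B_props (n : ℕ) :
    Convex ℝ {x : EuclideanSpace ℝ (Fin n) | ∑ i, |x i| ≤ 1} ∧
    IsCompact {x : EuclideanSpace ℝ (Fin n) | ∑ i, |x i| ≤ 1} ∧
    {x : EuclideanSpace ℝ (Fin n) | ∑ i, |x i| ≤ 1} ∈ nhds (0 : EuclideanSpace ℝ (Fin n)) := by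
  set B := {x : EuclideanSpace ℝ (Fin n) | ∑ i, |x i| ≤ 1} with hB
  have habs : ∀ (x : EuclideanSpace ℝ (Fin n)) i, |x i| ≤ ‖x‖ := by
    intro x i
    have h1 : (x i) ^ 2 ≤ ∑ j, (x j) ^ 2 :=
      Finset.single_le_sum (fun j _ => sq_nonneg (x j)) (Finset.mem_univ i)
    have h2 : ‖x‖ = Real.sqrt (∑ j, (x j) ^ 2) := by
      rw [EuclideanSpace.norm_eq]
      congr 1
      exact Finset.sum_congr rfl fun j _ => by rw [Real.norm_eq_abs, sq_abs]
    rw [h2, ← Real.sqrt_sq_eq_abs]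
    exact Real.sqrt_le_sqrt h1
  have hcont : Continuous fun x : EuclideanSpace ℝ (Fin n) => ∑ i, |x i| := by
    refine continuous_finset_sum _ fun i _ => ?_
    exact (continuous_apply i).comp (PiLp.continuous_ofLp 2 _) |>.abs
  refine ⟨?_, ?_, ?_⟩
  · intro x hx y hy a b ha hb hab
    simp only [hB, Set.mem_setOf_eq] at *
    calc ∑ i, |(a • x + b • y : EuclideanSpace ℝ (Fin n)) i|
        ≤ ∑ i, (a * |x i| + b * |y i|) := by
          refine Finset.sum_le_sum fun i _ => ?_
          have : (a • x + b • y : EuclideanSpace ℝ (Fin n)) i = a * x i + b * y i := rfl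
          rw [this]
          calc |a * x i + b * y i| ≤ |a * x i| + |b * y i| := abs_add_le _ _
          _ = a * |x i| + b * |y i| := by rw [abs_mul, abs_mul, abs_of_nonneg ha, abs_of_nonneg hb]
      _ = a * (∑ i, |x i|) + b * (∑ i, |y i|) := by
          rw [Finset.sum_add_distrib, Finset.mul_sum, Finset.mul_sum]
      _ ≤ a * 1 + b * 1 := by
          exact add_le_add (mul_le_mul_of_nonneg_left hx ha) (mul_le_mul_of_nonneg_left hy hb)
      _ = 1 := by rw [mul_one, mul_one, hab]
  · have hclosed : IsClosed B := isClosed_le hcont continuous_const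
    have hbdd : B ⊆ Metric.closedBall 0 1 := by
      intro x hx
      rw [Metric.mem_closedBall, dist_zero_right]
      calc ‖x‖ = Real.sqrt (∑ j, (x j) ^ 2) := by
            rw [EuclideanSpace.norm_eq]
            congr 1
            exact Finset.sum_congr rfl fun j _ => by rw [Real.norm_eq_abs, sq_abs]
        _ ≤ Real.sqrt ((∑ j, |x j|) ^ 2) := by
            refine Real.sqrt_le_sqrt ?_
            have e1 : ∑ j, (x j) ^ 2 = ∑ j, (|x j|) ^ 2 :=
              Finset.sum_congr rfl fun j _ => (sq_abs (x j)).symm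
            rw [e1]
            exact Finset.sum_sq_le_sq_sum_of_nonneg fun j _ => abs_nonneg _
        _ = abs (∑ j, |x j|) := Real.sqrt_sq_eq_abs _
        _ = ∑ j, |x j| := abs_of_nonneg (Finset.sum_nonneg fun j _ => abs_nonneg _)
        _ ≤ 1 := hx
    exact (isCompact_closedBall 0 1).of_isClosed_subset hclosed hbdd
  · -- ball 0 (n+1)⁻¹ ⊆ B
    refine Filter.mem_of_superset (Metric.ball_mem_nhds 0 (by positivity : (0:ℝ) < ((n:ℝ)+1)⁻¹)) ?_
    intro x hx
    rw [Metric.mem_ball, dist_zero_right] at hx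
    simp only [hB, Set.mem_setOf_eq]
    calc ∑ i, |x i| ≤ ∑ _i : Fin n, ‖x‖ := Finset.sum_le_sum fun i _ => habs x i
      _ = n * ‖x‖ := by rw [Finset.sum_const, Finset.card_univ, Fintype.card_fin, nsmul_eq_mul]
      _ ≤ n * ((n:ℝ)+1)⁻¹ := by
          refine mul_le_mul_of_nonneg_left hx.le (Nat.cast_nonneg n)
      _ ≤ 1 := by
          rw [mul_inv_le_iff₀ (by positivity), one_mul]
          linarith

variable {d : ℕ}

local notation "E" => EuclideanSpace ℝ (Fin d)

lemma aux_level {K : Set E} (hconv : Convex ℝ K) (hcl : IsClosed K) (hnhds : K ∈ nhds 0)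
    {t : ℝ} (ht : 0 < t) : {y : E | gauge K y ≤ t} = (t • K : Set E) := by
  ext y
  have h1 : gauge K (t⁻¹ • y) = t⁻¹ * gauge K y := by
    rw [gauge_smul_of_nonneg (by positivity), smul_eq_mul]
  constructor
  · intro hy
    rw [mem_smul_set_iff_inv_smul_mem₀ ht.ne']
    have h2 : gauge K (t⁻¹ • y) ≤ 1 := by
      rw [h1, inv_mul_le_iff₀ ht, mul_one]; exact hy
    have := (gauge_le_one_iff_mem_closure hconv hnhds).1 h2
    rwa [hcl.closure_eq] at this
  · intro hy
    rw [mem_smul_set_iff_inv_smul_mem₀ ht.ne'] at hy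
    have h2 : gauge K (t⁻¹ • y) ≤ 1 := gauge_le_one_of_mem hy
    rw [h1, inv_mul_le_iff₀ ht, mul_one] at h2
    exact h2

lemma aux_ae {K : Set E} (hconv : Convex ℝ K) (hcomp : IsCompact K) (hnhds : K ∈ nhds 0)
    {t : ℝ} (ht : 0 < t) : {y : E | gauge K y < t} =ᵐ[volume] (t • K : Set E) := by
  rw [MeasureTheory.ae_eq_set]
  constructor
  · have hsub : {y : E | gauge K y < t} \ (t • K : Set E) = ∅ := by
      rw [Set.diff_eq_empty]
      intro y hy
      have : y ∈ {y : E | gauge K y ≤ t} := Set.mem_setOf.2 (le_of_lt (Set.mem_setOf.1 hy))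
      rwa [aux_level hconv hcomp.isClosed hnhds ht] at this
    rw [hsub]; exact measure_empty
  · have hsub : ((t • K : Set E)) \ {y : E | gauge K y < t} ⊆ (t • (frontier K) : Set E) := by
      rintro y ⟨⟨z, hz, rfl⟩, hy2⟩
      refine ⟨z, ?_, rfl⟩
      have hgz : ¬ (gauge K z < 1) := by
        intro hlt
        apply hy2
        have : gauge K (t • z) = t * gauge K z := by
          rw [gauge_smul_of_nonneg ht.le, smul_eq_mul]
        rw [Set.mem_setOf, this]
        calc t * gauge K z < t * 1 := by exact mul_lt_mul_of_pos_left hlt ht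
        _ = t := mul_one t
      have hzint : z ∉ interior K := fun h => hgz (interior_subset_gauge_lt_one K h)
      exact ⟨subset_closure hz, hzint⟩
    refine measure_mono_null hsub ?_
    rw [Measure.addHaar_smul_of_nonneg volume ht.le, hconv.addHaar_frontier volume, mul_zero]



lemma aux_smul_lintegral {K : Set E} (hmK : MeasurableSet K) (k : ℕ) {t : ℝ} (ht : 0 < t) :
    ∫⁻ y in (t • K : Set E), (‖y‖₊ : ℝ≥0∞) ^ k
      = ENNReal.ofReal (t ^ (d + k)) * ∫⁻ z in K, (‖z‖₊ : ℝ≥0∞) ^ k := by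
  have hfin : Module.finrank ℝ E = d := finrank_euclideanSpace_fin
  have hmeas : Measurable fun y : E => (‖y‖₊ : ℝ≥0∞) ^ k :=
    (continuous_nnnorm.measurable.coe_nnreal_ennreal).pow_const k
  have hmtK : MeasurableSet (t • K : Set E) := hmK.const_smul₀ t
  have key : ∫⁻ y, Set.indicator (t • K : Set E) (fun y => (‖y‖₊ : ℝ≥0∞) ^ k) y
        ∂(Measure.map (fun x : E => t • x) volume)
      = ∫⁻ z, Set.indicator (t • K : Set E) (fun y => (‖y‖₊ : ℝ≥0∞) ^ k) (t • z) ∂volume :=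
    lintegral_map (hmeas.indicator hmtK) (measurable_const_smul t)
  rw [Measure.map_addHaar_smul (volume : Measure E) ht.ne', lintegral_smul_measure,
    lintegral_indicator hmtK] at key
  have hrw : ∀ z : E, Set.indicator (t • K : Set E) (fun y => (‖y‖₊ : ℝ≥0∞) ^ k) (t • z)
      = Set.indicator K (fun z => ENNReal.ofReal (t ^ k) * (‖z‖₊ : ℝ≥0∞) ^ k) z := by
    intro z
    by_cases hz : z ∈ K
    · rw [Set.indicator_of_mem ((smul_mem_smul_set_iff₀ ht.ne' K z).2 hz),
        Set.indicator_of_mem hz]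
      rw [nnnorm_smul, ENNReal.coe_mul, mul_pow, ENNReal.ofReal_pow ht.le,
        ← enorm_eq_nnnorm, Real.enorm_eq_ofReal ht.le]
    · rw [Set.indicator_of_notMem (fun h => hz ((smul_mem_smul_set_iff₀ ht.ne' K z).1 h)),
        Set.indicator_of_notMem hz]
  simp_rw [hrw] at key
  rw [lintegral_indicator hmK, lintegral_const_mul' _ _ ENNReal.ofReal_ne_top] at key
  -- key : ofReal |(t^d)⁻¹| * ∫⁻ in t•K = ofReal (t^k) * ∫⁻ in K
  have habs : |(t ^ Module.finrank ℝ E)⁻¹| = (t ^ d)⁻¹ := by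
    rw [hfin, abs_of_pos (by positivity)]
  rw [habs] at key
  have hcancel : ENNReal.ofReal (t ^ d) * ENNReal.ofReal ((t ^ d)⁻¹) = 1 := by
    rw [← ENNReal.ofReal_mul (by positivity), mul_inv_cancel₀ (by positivity), ENNReal.ofReal_one]
  calc ∫⁻ y in (t • K : Set E), (‖y‖₊ : ℝ≥0∞) ^ k
      = (ENNReal.ofReal (t ^ d) * ENNReal.ofReal ((t ^ d)⁻¹)) *
          ∫⁻ y in (t • K : Set E), (‖y‖₊ : ℝ≥0∞) ^ k := by rw [hcancel, one_mul]
    _ = ENNReal.ofReal (t ^ d) * (ENNReal.ofReal ((t ^ d)⁻¹) *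
          ∫⁻ y in (t • K : Set E), (‖y‖₊ : ℝ≥0∞) ^ k) := by rw [mul_assoc]
    _ = ENNReal.ofReal (t ^ d) * (ENNReal.ofReal (t ^ k) * ∫⁻ z in K, (‖z‖₊ : ℝ≥0∞) ^ k) := by
          rw [← key, smul_eq_mul]
    _ = ENNReal.ofReal (t ^ (d + k)) * ∫⁻ z in K, (‖z‖₊ : ℝ≥0∞) ^ k := by
          rw [← mul_assoc, ← ENNReal.ofReal_mul (by positivity), ← pow_add]




lemma aux_key {ε : ℝ} (hε : 0 < ε) {K : Set E} (hconv : Convex ℝ K) (hcomp : IsCompact K)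
    (hnhds : K ∈ nhds 0) (k : ℕ) :
    ∫⁻ y, (‖y‖₊ : ℝ≥0∞) ^ k * ENNReal.ofReal (Real.exp (-ε * gauge K y))
      = (∫⁻ z in K, (‖z‖₊ : ℝ≥0∞) ^ k) *
          ENNReal.ofReal (ε * ∫ t in Ioi (0:ℝ), t ^ (d + k) * Real.exp (-ε * t)) := by
  set g : E → ℝ := gauge K with hg_def
  have hg : Continuous g := continuous_gauge hconv hnhds
  have hg0 : ∀ y, 0 ≤ g y := fun y => gauge_nonneg y
  set c : ℝ → ℝ≥0∞ := fun t => ENNReal.ofReal (ε * Real.exp (-ε * t)) with hc_def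
  have hcne : ∀ t, c t ≠ ⊤ := fun t => ENNReal.ofReal_ne_top
  have hcmeas : Measurable c := by
    have h : Measurable fun t : ℝ => ε * Real.exp (-ε * t) :=
      (Real.measurable_exp.comp (measurable_id.const_mul (-ε))).const_mul ε
    exact h.ennreal_ofReal
  set f : E → ℝ → ℝ≥0∞ := fun y t => if g y < t then (‖y‖₊ : ℝ≥0∞) ^ k * c t else 0 with hf_def
  -- step 2 : pointwise identity
  have step2 : ∀ y : E, (‖y‖₊ : ℝ≥0∞) ^ k * ENNReal.ofReal (Real.exp (-ε * g y))
      = ∫⁻ t in Ioi (0:ℝ), f y t := by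
    intro y
    have h1 : ∀ t : ℝ, f y t = Set.indicator (Ioi (g y)) (fun t => (‖y‖₊ : ℝ≥0∞) ^ k * c t) t := by
      intro t
      simp only [hf_def, Set.indicator_apply, Set.mem_Ioi]
    simp_rw [h1]
    rw [lintegral_indicator measurableSet_Ioi, Measure.restrict_restrict measurableSet_Ioi,
      Set.inter_eq_self_of_subset_left (Ioi_subset_Ioi (hg0 y)),
      lintegral_const_mul' _ _ (by exact ENNReal.pow_ne_top ENNReal.coe_ne_top),
      aux_exp_tail hε (g y)]
  simp_rw [step2]
  -- step 3 : swap the two integrals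
  have hmeasf : AEMeasurable (Function.uncurry f) (volume.prod (volume.restrict (Ioi (0:ℝ)))) := by
    refine Measurable.aemeasurable ?_
    have hset : MeasurableSet {p : E × ℝ | g p.1 < p.2} :=
      (isOpen_lt (hg.comp continuous_fst) continuous_snd).measurableSet
    refine Measurable.ite hset ?_ measurable_const
    exact (((continuous_fst.nnnorm).measurable.coe_nnreal_ennreal).pow_const k).mul
      (hcmeas.comp measurable_snd)
  rw [lintegral_lintegral_swap hmeasf]
  -- step 4 : inner integral for fixed t > 0
  have step4 : ∫⁻ t in Ioi (0:ℝ), ∫⁻ y, f y t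
      = ∫⁻ t in Ioi (0:ℝ),
          (∫⁻ z in K, (‖z‖₊ : ℝ≥0∞) ^ k) * ENNReal.ofReal (ε * (t ^ (d + k) * Real.exp (-ε * t))) := by
    refine setLIntegral_congr_fun measurableSet_Ioi (fun t ht => ?_)
    have ht' : (0:ℝ) < t := ht
    have h1 : ∀ y : E, f y t
        = Set.indicator {y : E | g y < t} (fun y => (‖y‖₊ : ℝ≥0∞) ^ k * c t) y := by
      intro y
      simp only [hf_def, Set.indicator_apply, Set.mem_setOf_eq]
    simp_rw [h1]
    rw [lintegral_indicator (isOpen_lt hg continuous_const).measurableSet,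
      lintegral_mul_const' _ _ (hcne t),
      setLIntegral_congr (aux_ae hconv hcomp hnhds ht),
      aux_smul_lintegral hcomp.isClosed.measurableSet k ht]
    rw [hc_def]
    rw [mul_comm (ENNReal.ofReal (t ^ (d+k))) _, mul_assoc,
      ← ENNReal.ofReal_mul (le_of_lt (pow_pos ht' (d+k)))]
    congr 2
    ring
  rw [step4, lintegral_const_mul' _ _ ?hC]
  · congr 1
    rw [← ofReal_integral_eq_lintegral_ofReal]
    · rw [← MeasureTheory.integral_const_mul]
    · exact (aux_int_pow_exp hε (d + k)).const_mul ε
    · refine (ae_restrict_iff' measurableSet_Ioi).2 (Filter.Eventually.of_forall fun t ht => ?_)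
      have : (0:ℝ) < t := ht
      positivity
  case hC =>
    -- ∫⁻ z in K, ‖z‖₊ ^ k ≠ ⊤ : K is compact hence bounded with finite measure
    obtain ⟨R, hR⟩ := hcomp.isBounded.subset_closedBall 0
    have hle : ∫⁻ z in K, (‖z‖₊ : ℝ≥0∞) ^ k ≤ ∫⁻ _ in K, ENNReal.ofReal (max R 0) ^ k := by
      refine setLIntegral_mono' hcomp.isClosed.measurableSet fun z hz => ?_
      have h1 : ‖z‖ ≤ max R 0 := le_trans (by simpa using hR hz) (le_max_left _ _)
      refine pow_le_pow_left' ?_ k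
      rw [← enorm_eq_nnnorm, ← ofReal_norm]
      exact ENNReal.ofReal_le_ofReal h1
    refine ne_top_of_le_ne_top ?_ hle
    rw [setLIntegral_const]
    exact ENNReal.mul_ne_top (ENNReal.pow_ne_top ENNReal.ofReal_ne_top)
      hcomp.measure_lt_top.ne

end AuxKnorm



set_option maxHeartbeats 1000000 in
/-- Error of the K-norm mechanism for approximately isotropic bodies: if
`K = F(B₁^n)` satisfies `(1/vol K) ∫_K ⟨z,v⟩² dz ≤ c² L² vol(K)^{2/d}` for every
unit vector `v`, then the K-norm mechanism has expected ℓ₂-error at most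
`((d+1)/ε) · √d · c · L · vol(K)^{1/d}`. -/
theorem knorm_mechanism_isotropic_error (n d : ℕ) (ε : ℝ) (hε : 0 < ε)
    (F : EuclideanSpace ℝ (Fin n) →ₗ[ℝ] EuclideanSpace ℝ (Fin d))
    (hF : Function.Surjective F)
    (K : Set (EuclideanSpace ℝ (Fin d)))
    (hK : K = F '' {x : EuclideanSpace ℝ (Fin n) | ∑ i, |x i| ≤ 1})
    (c L : ℝ) (hc : 0 < c) (hL : 0 < L)
    (hiso : ∀ v : EuclideanSpace ℝ (Fin d), ‖v‖ = 1 →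
      (volume K).toReal⁻¹ * ∫ z in K, (inner ℝ z v : ℝ) ^ 2 ≤
        c ^ 2 * L ^ 2 * (volume K).toReal ^ ((2 : ℝ) / (d : ℝ)))
    (Z : ℝ) (hZ : Z = ∫ a : EuclideanSpace ℝ (Fin d), Real.exp (-ε * gauge K a))
    (μ : EuclideanSpace ℝ (Fin n) → Measure (EuclideanSpace ℝ (Fin d)))
    (hμ : ∀ x, μ x = volume.withDensity
      (fun a => ENNReal.ofReal (Z⁻¹ * Real.exp (-ε * gauge K (F x - a)))))
    (x : EuclideanSpace ℝ (Fin n)) :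
    (∫ a, ‖F x - a‖ ∂ μ x) ≤
      ((d : ℝ) + 1) / ε * Real.sqrt d * c * L * (volume K).toReal ^ (1 / (d : ℝ)) := by
  by_cases hd : d = 0
  · subst hd
    have h1 : ∀ a : EuclideanSpace ℝ (Fin 0), ‖F x - a‖ = 0 := fun a => by
      have h2 : F x - a = 0 := Subsingleton.elim _ _
      rw [h2, norm_zero]
    have h3 : (∫ a, ‖F x - a‖ ∂ μ x) = 0 := by
      simp only [h1]
      exact integral_zero _ _
    rw [h3]
    positivity
  have hd1 : 0 < d := Nat.pos_of_ne_zero hd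
  have hdR : (0:ℝ) < d := Nat.cast_pos.2 hd1
  obtain ⟨hBconv, hBcomp, hBnhds⟩ := aux_B_props n
  have hFcont : Continuous F := F.continuous_of_finiteDimensional
  have hKconv : Convex ℝ K := hK ▸ hBconv.linear_image F
  have hKcomp : IsCompact K := hK ▸ hBcomp.image hFcont
  have hKnhds : K ∈ nhds 0 := by
    have hopen : IsOpenMap F := by
      have h := (LinearMap.toContinuousLinearMap F).isOpenMap
        (by rwa [LinearMap.coe_toContinuousLinearMap'])
      rwa [LinearMap.coe_toContinuousLinearMap'] at h
    refine mem_nhds_iff.2 ⟨F '' interior {x : EuclideanSpace ℝ (Fin n) | ∑ i, |x i| ≤ 1},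
      ?_, hopen _ isOpen_interior, ⟨0, mem_interior_iff_mem_nhds.2 hBnhds, map_zero F⟩⟩
    rw [hK]
    exact Set.image_mono interior_subset
  have hmK : MeasurableSet K := hKcomp.isClosed.measurableSet
  have hgK : Continuous (gauge K) := continuous_gauge hKconv hKnhds
  set V : ℝ := (volume K).toReal with hV_def
  have hVlt : volume K < ⊤ := hKcomp.measure_lt_top
  have hV0 : 0 < V := ENNReal.toReal_pos
    (Measure.measure_pos_of_nonempty_interior volume
      ⟨0, mem_interior_iff_mem_nhds.2 hKnhds⟩).ne' hVlt.ne
  -- the two 1-dimensional integrals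
  set J0 : ℝ := ∫ t in Ioi (0:ℝ), t ^ (d + 0) * Real.exp (-ε * t) with hJ0_def
  set J1 : ℝ := ∫ t in Ioi (0:ℝ), t ^ (d + 1) * Real.exp (-ε * t) with hJ1_def
  have hJ0val : J0 = (1 / ε) ^ (d + 0 + 1) * (d + 0).factorial := aux_gamma_val hε (d + 0)
  have hJ1val : J1 = (1 / ε) ^ (d + 1 + 1) * (d + 1).factorial := aux_gamma_val hε (d + 1)
  have hJ0pos : 0 < J0 := by
    rw [hJ0val]
    have hf := Nat.factorial_pos (d + 0)
    have hfR : (0:ℝ) < (d + 0).factorial := Nat.cast_pos.2 hf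
    positivity
  have hJ1pos : 0 < J1 := by
    rw [hJ1val]
    have hf := Nat.factorial_pos (d + 1)
    have hfR : (0:ℝ) < (d + 1).factorial := Nat.cast_pos.2 hf
    positivity
  have hratio : ε * J1 = (((d : ℝ) + 1) / ε) * (ε * J0) := by
    rw [hJ0val, hJ1val, Nat.factorial_succ (d + 0)]
    simp only [Nat.add_zero]
    push_cast
    field_simp
    ring_nf
    rw [pow_two, ← mul_assoc, mul_inv_cancel₀ hε.ne', one_mul]
  have hcontExp : Continuous fun a : EuclideanSpace ℝ (Fin d) =>
      Real.exp (-ε * gauge K a) :=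
    Real.continuous_exp.comp (continuous_const.mul hgK)
  -- value of Z
  have hZval : Z = V * (ε * J0) := by
    rw [hZ, integral_eq_lintegral_of_nonneg_ae
      (Filter.Eventually.of_forall fun a => Real.exp_nonneg _) hcontExp.aestronglyMeasurable]
    have h := aux_key hε hKconv hKcomp hKnhds 0
    simp only [pow_zero, one_mul] at h
    rw [h, setLIntegral_one, ENNReal.toReal_mul, ENNReal.toReal_ofReal (by positivity)]
  have hZpos : 0 < Z := by rw [hZval]; positivity
  -- value of A
  set I1 : ℝ := ∫ z in K, ‖z‖ with hI1_def
  have hI1nonneg : 0 ≤ I1 := setIntegral_nonneg hmK fun z _ => norm_nonneg z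
  set A : ℝ := ∫ y : EuclideanSpace ℝ (Fin d), ‖y‖ * Real.exp (-ε * gauge K y) with hA_def
  have hAval : A = I1 * (ε * J1) := by
    rw [hA_def, integral_eq_lintegral_of_nonneg_ae (f := fun y => ‖y‖ * Real.exp (-ε * gauge K y))
      (Filter.Eventually.of_forall fun y => by positivity)
      ((continuous_norm.mul hcontExp).aestronglyMeasurable)]
    have hpt : ∀ y : EuclideanSpace ℝ (Fin d),
        ENNReal.ofReal (‖y‖ * Real.exp (-ε * gauge K y))
          = (‖y‖₊ : ℝ≥0∞) ^ 1 * ENNReal.ofReal (Real.exp (-ε * gauge K y)) := fun y => by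
      rw [ENNReal.ofReal_mul (norm_nonneg y), ofReal_norm, enorm_eq_nnnorm, pow_one]
    simp_rw [hpt]
    rw [aux_key hε hKconv hKcomp hKnhds 1]
    have hC1 : ∫⁻ z in K, (‖z‖₊ : ℝ≥0∞) ^ 1 = ENNReal.ofReal I1 := by
      simp_rw [pow_one]
      have hInt : IntegrableOn (fun z : EuclideanSpace ℝ (Fin d) => ‖z‖) K volume :=
        ContinuousOn.integrableOn_compact hKcomp continuous_norm.continuousOn
      have h := ofReal_integral_eq_lintegral_ofReal hInt
        (Filter.Eventually.of_forall fun z => norm_nonneg z)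
      simp_rw [ofReal_norm, enorm_eq_nnnorm] at h
      exact h.symm
    rw [hC1, ← ENNReal.ofReal_mul hI1nonneg, ENNReal.toReal_ofReal
      (mul_nonneg hI1nonneg (by positivity))]
  -- the mechanism integral equals Z⁻¹ * A
  have hLHS : (∫ a, ‖F x - a‖ ∂ μ x) = Z⁻¹ * A := by
    rw [hμ x]
    have h1 : Continuous fun a : EuclideanSpace ℝ (Fin d) => F x - a :=
      continuous_const.sub continuous_id
    have hρ : Continuous fun a : EuclideanSpace ℝ (Fin d) =>
        Z⁻¹ * Real.exp (-ε * gauge K (F x - a)) :=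
      continuous_const.mul (Real.continuous_exp.comp (continuous_const.mul (hgK.comp h1)))
    have hdens : (fun a : EuclideanSpace ℝ (Fin d) =>
        ENNReal.ofReal (Z⁻¹ * Real.exp (-ε * gauge K (F x - a))))
        = fun a => ((Real.toNNReal (Z⁻¹ * Real.exp (-ε * gauge K (F x - a))) : ℝ≥0) : ℝ≥0∞) :=
      rfl
    rw [hdens, integral_withDensity_eq_integral_smul hρ.measurable.real_toNNReal _]
    have hpt2 : ∀ a : EuclideanSpace ℝ (Fin d),
        (Real.toNNReal (Z⁻¹ * Real.exp (-ε * gauge K (F x - a)))) • ‖F x - a‖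
          = Z⁻¹ * ((fun y => ‖y‖ * Real.exp (-ε * gauge K y)) (F x - a)) := by
      intro a
      rw [NNReal.smul_def, smul_eq_mul,
        Real.coe_toNNReal _ (by positivity : (0:ℝ) ≤ Z⁻¹ * Real.exp (-ε * gauge K (F x - a)))]
      ring
    simp_rw [hpt2]
    rw [MeasureTheory.integral_const_mul,
      integral_sub_left_eq_self (fun y => ‖y‖ * Real.exp (-ε * gauge K y)) volume (F x)]
  -- coordinate analysis
  have hnormsq : ∀ z : EuclideanSpace ℝ (Fin d), ‖z‖ ^ 2 = ∑ i, (z i) ^ 2 := by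
    intro z
    have h1 : ‖z‖ = Real.sqrt (∑ i, (z i) ^ 2) := by
      rw [EuclideanSpace.norm_eq]
      congr 1
      exact Finset.sum_congr rfl fun i _ => by rw [Real.norm_eq_abs, sq_abs]
    rw [h1, Real.sq_sqrt (Finset.sum_nonneg fun i _ => sq_nonneg _)]
  have hcoord : ∀ i : Fin d, Continuous fun z : EuclideanSpace ℝ (Fin d) => z i := fun i =>
    (continuous_apply i).comp (PiLp.continuous_ofLp 2 fun _ : Fin d => ℝ)
  set S : ℝ := ∫ z in K, ‖z‖ ^ 2 with hS_def
  have hScoord : S = ∑ i, ∫ z in K, (z i) ^ 2 := by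
    rw [hS_def]
    have h1 : ∫ z in K, ‖z‖ ^ 2 = ∫ z in K, ∑ i, (z i) ^ 2 := by
      exact integral_congr_ae (Filter.Eventually.of_forall fun z => hnormsq z)
    rw [h1]
    exact integral_finset_sum _ fun i _ =>
      ContinuousOn.integrableOn_compact hKcomp ((hcoord i).pow 2).continuousOn
  have hSbound : S ≤ (d:ℝ) * (c ^ 2 * L ^ 2 * V ^ ((2:ℝ) / (d:ℝ))) * V := by
    have hterm : ∀ i : Fin d, ∫ z in K, (z i) ^ 2
        ≤ V * (c ^ 2 * L ^ 2 * V ^ ((2:ℝ) / (d:ℝ))) := by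
      intro i
      have hunit : ‖EuclideanSpace.single i (1:ℝ)‖ = 1 := by
        rw [EuclideanSpace.norm_single, norm_one]
      have hiso' := hiso (EuclideanSpace.single i (1:ℝ)) hunit
      have hinner : ∀ z : EuclideanSpace ℝ (Fin d),
          (inner ℝ z (EuclideanSpace.single i (1:ℝ)) : ℝ) = z i := by
        intro z
        rw [EuclideanSpace.inner_single_right]
        simp
      simp_rw [hinner] at hiso'
      rwa [inv_mul_le_iff₀ hV0] at hiso'
    calc S = ∑ i, ∫ z in K, (z i) ^ 2 := hScoord
      _ ≤ ∑ _i : Fin d, V * (c ^ 2 * L ^ 2 * V ^ ((2:ℝ) / (d:ℝ))) :=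
          Finset.sum_le_sum fun i _ => hterm i
      _ = (d:ℝ) * (c ^ 2 * L ^ 2 * V ^ ((2:ℝ) / (d:ℝ))) * V := by
          rw [Finset.sum_const, Finset.card_univ, Fintype.card_fin, nsmul_eq_mul]
          ring
  set M : ℝ := Real.sqrt d * c * L * V ^ (1 / (d:ℝ)) with hM_def
  have hMpos : 0 < M := by
    rw [hM_def]
    have h1 : 0 < Real.sqrt d := Real.sqrt_pos.2 hdR
    have h2 : 0 < V ^ (1 / (d:ℝ)) := Real.rpow_pos_of_pos hV0 _
    positivity
  have hM2 : M ^ 2 = (d:ℝ) * (c ^ 2 * L ^ 2 * V ^ ((2:ℝ) / (d:ℝ))) := by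
    rw [hM_def, mul_pow, mul_pow, mul_pow, Real.sq_sqrt hdR.le]
    have h1 : (V ^ (1 / (d:ℝ))) ^ 2 = V ^ ((2:ℝ) / (d:ℝ)) := by
      rw [← Real.rpow_natCast (V ^ (1 / (d:ℝ))) 2, ← Real.rpow_mul hV0.le]
      congr 1
      push_cast
      ring
    rw [h1]
    ring
  have hSM : S ≤ M ^ 2 * V := by rw [hM2]; exact hSbound
  have hI1le : I1 ≤ M * V := by
    have h1 : I1 ≤ ∫ z in K, (M ^ 2 + ‖z‖ ^ 2) / (2 * M) := by
      refine setIntegral_mono_on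
        (ContinuousOn.integrableOn_compact hKcomp continuous_norm.continuousOn)
        (ContinuousOn.integrableOn_compact hKcomp
          (((continuous_const.add (continuous_norm.pow 2)).div_const (2 * M)).continuousOn))
        hmK fun z _ => ?_
      rw [le_div_iff₀ (by positivity)]
      have hx := sq_nonneg (M - ‖z‖)
      have hexp : (M - ‖z‖) ^ 2 = M ^ 2 - 2 * M * ‖z‖ + ‖z‖ ^ 2 := by ring
      rw [hexp] at hx
      linarith
    have h2 : ∫ z in K, (M ^ 2 + ‖z‖ ^ 2) / (2 * M) = (M ^ 2 * V + S) * (2 * M)⁻¹ := by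
      simp_rw [div_eq_mul_inv]
      rw [MeasureTheory.integral_mul_const, integral_add (g := fun z => ‖z‖ ^ 2)
        (integrableOn_const (C := M ^ 2) hVlt.ne)
        (ContinuousOn.integrableOn_compact hKcomp (continuous_norm.pow 2).continuousOn),
        setIntegral_const, smul_eq_mul, Measure.real, ← hV_def]
      ring_nf
      simp only [hS_def]
      ring
    have h3 : (M ^ 2 * V + S) * (2 * M)⁻¹ ≤ M * V := by
      have h4 : (M ^ 2 * V + S) ≤ 2 * (M ^ 2 * V) := by linarith [hSM]
      calc (M ^ 2 * V + S) * (2 * M)⁻¹ ≤ 2 * (M ^ 2 * V) * (2 * M)⁻¹ :=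
            mul_le_mul_of_nonneg_right h4 (by positivity)
        _ = M * V := by field_simp
    calc I1 ≤ ∫ z in K, (M ^ 2 + ‖z‖ ^ 2) / (2 * M) := h1
      _ = (M ^ 2 * V + S) * (2 * M)⁻¹ := h2
      _ ≤ M * V := h3
  -- final computation
  have hfinal : Z⁻¹ * A = ((d:ℝ) + 1) / ε * (I1 / V) := by
    rw [hZval, hAval, hratio]
    field_simp
  rw [hLHS, hfinal]
  calc ((d:ℝ) + 1) / ε * (I1 / V) ≤ ((d:ℝ) + 1) / ε * M := by
        refine mul_le_mul_of_nonneg_left ?_ (by positivity)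
        rw [div_le_iff₀ hV0]
        exact hI1le
    _ = ((d : ℝ) + 1) / ε * Real.sqrt d * c * L * V ^ (1 / (d : ℝ)) := by
        rw [hM_def]; ring
end

section
/- Let A be a nonempty closed convex set in ℝ^d, let B denote the closed Euclidean unit ball in ℝ^d, and let 0 ≤ r < 1 be such that B ⊆ A + r·B (Minkowski sum). Then (1 − r)·B ⊆ A. -/
open Pointwise Metric
open scoped RealInnerProductSpace

/-- Dilated ball containment: if `A ⊆ ℝ^d` is a nonempty closed convex set and
`B ⊆ A + r·B` for the closed Euclidean unit ball `B` and some `0 ≤ r < 1`, then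
`(1 − r)·B ⊆ A`. -/
theorem dilated_ball_containment (d : ℕ) (A : Set (EuclideanSpace ℝ (Fin d)))
    (hne : A.Nonempty) (hclosed : IsClosed A) (hconv : Convex ℝ A)
    (r : ℝ) (hr0 : 0 ≤ r) (hr1 : r < 1)
    (h : closedBall (0 : EuclideanSpace ℝ (Fin d)) 1 ⊆
      A + r • closedBall (0 : EuclideanSpace ℝ (Fin d)) 1) :
    (1 - r) • closedBall (0 : EuclideanSpace ℝ (Fin d)) 1 ⊆ A := by
  set E := EuclideanSpace ℝ (Fin d)
  rintro y hy
  obtain ⟨x, hx, rfl⟩ := hy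
  simp only [mem_closedBall, dist_zero_right] at hx
  by_contra hyA
  obtain ⟨f, u, hfa, hfy⟩ := geometric_hahn_banach_closed_point hconv hclosed hyA
  have hf0 : f ≠ 0 := by
    rintro rfl
    obtain ⟨a, ha⟩ := hne
    have h1 := hfa a ha
    simp only [ContinuousLinearMap.zero_apply] at h1 hfy
    linarith
  set v : E := (InnerProductSpace.toDual ℝ E).symm f with hv
  have hvf : ∀ z : E, f z = ⟪v, z⟫ := by
    intro z
    exact (InnerProductSpace.toDual_symm_apply (𝕜 := ℝ) (E := E)).symm
  have hvnorm : ‖v‖ = ‖f‖ := by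
    rw [hv]
    exact ((InnerProductSpace.toDual ℝ E).symm.norm_map f)
  have hv0 : v ≠ 0 := by
    intro h0
    apply hf0
    apply (InnerProductSpace.toDual ℝ E).symm.injective
    simp [← hv, h0]
  have hvpos : 0 < ‖v‖ := norm_pos_iff.mpr hv0
  -- the maximizer on the unit ball
  set b : E := ‖v‖⁻¹ • v with hb
  have hbball : b ∈ closedBall (0 : E) 1 := by
    simp only [mem_closedBall, dist_zero_right, hb, norm_smul, norm_inv, norm_norm]
    rw [Real.norm_of_nonneg (norm_nonneg v), inv_mul_cancel₀ hvpos.ne']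
  have hfb : f b = ‖f‖ := by
    rw [hvf, hb, real_inner_smul_right, real_inner_self_eq_norm_sq, ← hvnorm]
    field_simp
  obtain ⟨a, ha, w, hw, habw⟩ := h hbball
  obtain ⟨b', hb', rfl⟩ := hw
  simp only [mem_closedBall, dist_zero_right] at hb'
  -- bound f b'
  have hfb' : f b' ≤ ‖f‖ := by
    calc f b' ≤ |f b'| := le_abs_self _
    _ ≤ ‖f‖ * ‖b'‖ := f.le_opNorm b'
    _ ≤ ‖f‖ * 1 := by nlinarith [norm_nonneg f]
    _ = ‖f‖ := mul_one _
  have hfa' : (1 - r) * ‖f‖ ≤ f a := by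
    have : f b = f a + r * f b' := by
      rw [← habw]; simp [map_add, map_smul]
    nlinarith [hfb]
  have hfx : f x ≤ ‖f‖ := by
    calc f x ≤ |f x| := le_abs_self _
    _ ≤ ‖f‖ * ‖x‖ := f.le_opNorm x
    _ ≤ ‖f‖ * 1 := by nlinarith [norm_nonneg f]
    _ = ‖f‖ := mul_one _
  have hfy' : f ((1 - r) • x) = (1 - r) * f x := by simp [map_smul]
  have h1 := hfa a ha
  nlinarith [hfy, norm_nonneg f]
end
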